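/- arXiv:1703.10447 — 2 statements merged into one kernel-verified Lean document; each statement's English description precedes it below -/
import Mathlib

section
/- For the 2-torus T² = ℝ²/(2πℤ)² with Dirac operator D_{M,t} associated to the metric g_t = dx² + dy² + (t²−1)(a dx + b dy)², a²+b²=1, acting on V_{m,n} = span{(c,d)ᵀ e^{i(mx+ny)}}, D_{M,t} is represented by a 2×2 matrix whose eigenvalues are ±√(m² + n² − (am+bn)² + (am+bn)²/t²). -/
open Complex Polynomial

/-- On `T² = ℝ²/(2πℤ)²` with the collapsed metric `g_t`, the Dirac operator
`D_{M,t}` acting on `V_{m,n}` is represented by the 2×2 complex matrix below,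
whose eigenvalues (roots of the characteristic polynomial) are
`±√(m² + n² − (am+bn)² + (am+bn)²/t²)`. -/
theorem stmt6 (a b t : ℝ) (hab : a ^ 2 + b ^ 2 = 1) (ht : 0 < t) (m n : ℤ)
    (A : Matrix (Fin 2) (Fin 2) ℂ)
    (hA : A = !![0, -I * (m : ℂ) - (n : ℂ) +
        (1 / (t : ℂ)) * (1 - (t : ℂ)) * (-(a : ℂ) + (b : ℂ) * I) *
          (I * (a : ℂ) * (m : ℂ) + I * (b : ℂ) * (n : ℂ));
      I * (m : ℂ) - (n : ℂ) +
        (1 / (t : ℂ)) * (1 - (t : ℂ)) * ((a : ℂ) + (b : ℂ) * I) *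
          (I * (a : ℂ) * (m : ℂ) + I * (b : ℂ) * (n : ℂ)), 0]) :
    ∀ μ : ℂ, (A.charpoly.IsRoot μ ↔
      μ = (Real.sqrt ((m : ℝ) ^ 2 + (n : ℝ) ^ 2 - (a * m + b * n) ^ 2 +
            (a * m + b * n) ^ 2 / t ^ 2) : ℂ) ∨
      μ = -(Real.sqrt ((m : ℝ) ^ 2 + (n : ℝ) ^ 2 - (a * m + b * n) ^ 2 +
            (a * m + b * n) ^ 2 / t ^ 2) : ℂ)) := by
  intro μ
  have htC : (t : ℂ) ≠ 0 := by exact_mod_cast ht.ne'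
  have hw : (t : ℂ) * (t : ℂ)⁻¹ = 1 := mul_inv_cancel₀ htC
  have habC : (a : ℂ) ^ 2 + (b : ℂ) ^ 2 = 1 := by exact_mod_cast hab
  set r : ℝ := (m : ℝ) ^ 2 + (n : ℝ) ^ 2 - (a * m + b * n) ^ 2 +
      (a * m + b * n) ^ 2 / t ^ 2 with hr_def
  have hr : 0 ≤ r := by
    have h1 : (a * m + b * n) ^ 2 ≤ (a ^ 2 + b ^ 2) * ((m : ℝ) ^ 2 + (n : ℝ) ^ 2) := by
      nlinarith [sq_nonneg (a * n - b * m)]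
    have h2 : (0:ℝ) ≤ (a * m + b * n) ^ 2 / t ^ 2 :=
      div_nonneg (sq_nonneg _) (sq_nonneg _)
    rw [hab, one_mul] at h1
    simp only [hr_def]
    linarith
  set c : ℂ := (1 / (t : ℂ)) * (1 - (t : ℂ)) with hc
  set p : ℂ := (a : ℂ) * (m : ℂ) + (b : ℂ) * (n : ℂ) with hp
  have key : ∀ μ : ℂ, A.charpoly.IsRoot μ ↔ μ ^ 2 = ((r : ℝ) : ℂ) := by
    intro ν
    have hcm : Matrix.charmatrix A = !![(X : ℂ[X]), -C (A 0 1); -C (A 1 0), X] := by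
      ext i j
      fin_cases i <;> fin_cases j <;>
        simp [Matrix.charmatrix_apply_eq, Matrix.charmatrix_apply_ne, hA]
    have hchar : A.charpoly = X ^ 2 - C (A 0 1 * A 1 0) := by
      rw [Matrix.charpoly, hcm, Matrix.det_fin_two_of]
      ring_nf
      simp [map_mul]
    have hprod : A 0 1 * A 1 0 = ((r : ℝ) : ℂ) := by
      have e1 : A 0 1 = -I * (m : ℂ) - (n : ℂ) + c * (-(a:ℂ) + (b:ℂ) * I) *
          (I * (a:ℂ) * (m:ℂ) + I * (b:ℂ) * (n:ℂ)) := by rw [hA]; simp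
      have e2 : A 1 0 = I * (m : ℂ) - (n : ℂ) + c * ((a:ℂ) + (b:ℂ) * I) *
          (I * (a:ℂ) * (m:ℂ) + I * (b:ℂ) * (n:ℂ)) := by rw [hA]; simp
      have step1 : A 0 1 * A 1 0 = (((n : ℂ) + c * p * b) ^ 2 + ((m : ℂ) + c * p * a) ^ 2) := by
        rw [e1, e2]
        linear_combination ((c * p * b) ^ 2 * (I ^ 2 - 1) - 2 * (n : ℂ) * (c * p * b)
          - ((m : ℂ) + c * p * a) ^ 2) * Complex.I_sq
      rw [step1, hr_def]
      push_cast
      linear_combination p ^ 2 * ((t : ℂ) * (t : ℂ)⁻¹ - 1 - 2 * (t : ℂ)⁻¹) * hw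
        + c ^ 2 * p ^ 2 * habC
    rw [hchar, hprod]
    simp [IsRoot, sub_eq_zero]
  have hs : ((Real.sqrt r : ℝ) : ℂ) ^ 2 = ((r : ℝ) : ℂ) := by
    rw [← Complex.ofReal_pow, Real.sq_sqrt hr]
  rw [key μ]
  constructor
  · intro h
    have h2 : (μ - ((Real.sqrt r : ℝ) : ℂ)) * (μ + ((Real.sqrt r : ℝ) : ℂ)) = 0 := by
      linear_combination h - hs
    rcases mul_eq_zero.mp h2 with h' | h'
    · exact Or.inl (sub_eq_zero.mp h')
    · exact Or.inr (eq_neg_of_add_eq_zero_left h')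
  · rintro (h | h) <;> rw [h] <;> [exact hs; linear_combination hs]
end

section
/- For the 3-torus with flow direction (a,b,c), a²+b²+c²=1, the matrix [[−k, −im−n],[im−n, k]] + ((1/t)−1)(iam+ibn+ick)·[[ic, −a+ib],[a+ib, −ic]] has eigenvalues ±√(k² + n² + m² + ((1−t²)/t²)(am+bn+ck)²). -/
open Complex Polynomial

private lemma charpoly_fin_two' (M : Matrix (Fin 2) (Fin 2) ℂ) :
    M.charpoly = X ^ 2 - C M.trace * X + C M.det := by
  rw [Matrix.charpoly, Matrix.det_fin_two, Matrix.charmatrix_apply_eq,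
    Matrix.charmatrix_apply_eq, Matrix.charmatrix_apply_ne _ _ _ (by decide),
    Matrix.charmatrix_apply_ne _ _ _ (by decide), Matrix.trace_fin_two, Matrix.det_fin_two]
  simp only [map_sub, map_add, map_mul]
  ring

/-- On the 3-torus with flow direction `(a,b,c)`, `a²+b²+c²=1`, the matrix
`[[−k, −im−n],[im−n, k]] + ((1/t)−1)(iam+ibn+ick)·[[ic, −a+ib],[a+ib, −ic]]`
has eigenvalues `±√(k² + n² + m² + ((1−t²)/t²)(am+bn+ck)²)`. -/
theorem stmt10 (a b c t : ℝ) (habc : a ^ 2 + b ^ 2 + c ^ 2 = 1) (ht : 0 < t)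
    (m n k : ℤ) (A : Matrix (Fin 2) (Fin 2) ℂ)
    (hA : A = !![-(k : ℂ), -I * (m : ℂ) - (n : ℂ); I * (m : ℂ) - (n : ℂ), (k : ℂ)] +
      ((1 / (t : ℂ) - 1) * (I * (a : ℂ) * (m : ℂ) + I * (b : ℂ) * (n : ℂ) +
          I * (c : ℂ) * (k : ℂ))) •
        !![I * (c : ℂ), -(a : ℂ) + (b : ℂ) * I;
           (a : ℂ) + (b : ℂ) * I, -I * (c : ℂ)]) :
    ∀ μ : ℂ, (A.charpoly.IsRoot μ ↔
      μ = (Real.sqrt ((k : ℝ) ^ 2 + (n : ℝ) ^ 2 + (m : ℝ) ^ 2 +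
            ((1 - t ^ 2) / t ^ 2) * (a * m + b * n + c * k) ^ 2) : ℂ) ∨
      μ = -(Real.sqrt ((k : ℝ) ^ 2 + (n : ℝ) ^ 2 + (m : ℝ) ^ 2 +
            ((1 - t ^ 2) / t ^ 2) * (a * m + b * n + c * k) ^ 2) : ℂ)) := by
  intro μ
  set R : ℝ := (k : ℝ) ^ 2 + (n : ℝ) ^ 2 + (m : ℝ) ^ 2 +
      ((1 - t ^ 2) / t ^ 2) * (a * m + b * n + c * k) ^ 2 with hR
  have ht' : (t : ℝ) ≠ 0 := ne_of_gt ht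
  have htC : (t : ℂ) ≠ 0 := by exact_mod_cast ht'
  have hR0 : 0 ≤ R := by
    have h1 : ((1 - t ^ 2) / t ^ 2) * (a * m + b * n + c * k) ^ 2 =
        (a * m + b * n + c * k) ^ 2 / t ^ 2 - (a * m + b * n + c * k) ^ 2 := by
      field_simp
    rw [hR, h1]
    have h2 : (a * m + b * n + c * k) ^ 2 ≤ (k : ℝ) ^ 2 + (n : ℝ) ^ 2 + (m : ℝ) ^ 2 := by
      nlinarith [sq_nonneg (a * (n:ℝ) - b * m), sq_nonneg (b * (k:ℝ) - c * n),
        sq_nonneg (a * (k:ℝ) - c * m), sq_nonneg (a * (m:ℝ) + b * n + c * k)]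
    have h3 : 0 ≤ (a * m + b * n + c * k) ^ 2 / t ^ 2 :=
      div_nonneg (sq_nonneg _) (sq_nonneg _)
    linarith
  have htr : A.trace = 0 := by
    subst hA
    simp [Matrix.trace_fin_two, Matrix.add_apply, Matrix.smul_apply]
    ring
  have hdet : A.det = -(R : ℂ) := by
    subst hA
    rw [Matrix.det_fin_two]
    simp only [Matrix.add_apply, Matrix.smul_apply, Matrix.cons_val', Matrix.cons_val_zero,
      Matrix.cons_val_one, Matrix.head_cons, Matrix.head_fin_const, Matrix.empty_val',
      Matrix.cons_val_fin_one, Matrix.of_apply, smul_eq_mul]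
    rw [hR]
    push_cast
    have habcC : (a : ℂ) ^ 2 + (b : ℂ) ^ 2 + (c : ℂ) ^ 2 = 1 := by exact_mod_cast habc
    have hsplit : ((1 : ℂ) - (t : ℂ) ^ 2) / (t : ℂ) ^ 2 = 1 / (t : ℂ) ^ 2 - 1 := by
      field_simp
    rw [hsplit]
    set L : ℂ := 1 / (t : ℂ) - 1 with hL
    set S : ℂ := (a : ℂ) * (m : ℂ) + (b : ℂ) * (n : ℂ) + (c : ℂ) * (k : ℂ) with hS
    have hLsq : L ^ 2 = 1 / (t : ℂ) ^ 2 - 2 / (t : ℂ) + 1 := by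
      rw [hL]; ring
    linear_combination (-(L ^ 2 * S ^ 2)) * habcC +
      ((m : ℂ) ^ 2 + 2 * L * S ^ 2 - L ^ 2 * S ^ 2 * (I ^ 2 - 1) * ((b : ℂ) ^ 2 + (c : ℂ) ^ 2)
        + L ^ 2 * S ^ 2 * (a : ℂ) ^ 2) * Complex.I_sq
  have hs : ((Real.sqrt R : ℝ) : ℂ) ^ 2 = (R : ℂ) := by
    rw [← Complex.ofReal_pow, Real.sq_sqrt hR0]
  rw [charpoly_fin_two', htr, hdet]
  constructor
  · intro h
    simp only [IsRoot, eval_add, eval_sub, eval_pow, eval_mul, eval_C, eval_X] at h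
    have h2 : (μ - ((Real.sqrt R : ℝ) : ℂ)) * (μ + ((Real.sqrt R : ℝ) : ℂ)) = 0 := by
      have : μ ^ 2 = (R : ℂ) := by linear_combination h
      linear_combination this - hs
    rcases mul_eq_zero.mp h2 with h3 | h3
    · exact Or.inl (by linear_combination h3)
    · exact Or.inr (by linear_combination h3)
  · rintro (rfl | rfl) <;>
      simp only [IsRoot, eval_add, eval_sub, eval_pow, eval_mul, eval_C, eval_X] <;>
      [linear_combination hs; linear_combination hs]
end
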